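/- arXiv:1701.00388 — 2 statements merged into one kernel-verified Lean document; each statement's English description precedes it below -/
import Mathlib

section
/- For all integers $m \geq 1$ and $k \geq r \geq 1$ with $k > r$, $\sum_{n=1}^{\infty} \frac{\zeta_n(m)}{(n+r)(n+k)} = \frac{1}{k-r}\left\{ \sum_{j=1}^{m-1} (-1)^{j-1}\zeta(m+1-j)\big(\zeta_{k-1}(j) - \zeta_{r-1}(j)\big) + (-1)^{m-1}\left( \sum_{i=1}^{k-1} \frac{H_i}{i^m} - \sum_{i=1}^{r-1} \frac{H_i}{i^m} \right) \right\}$. -/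
noncomputable def H (n : ℕ) : ℝ := ∑ j ∈ Finset.Icc 1 n, (1 : ℝ) / j

noncomputable def zh (m n : ℕ) : ℝ := ∑ j ∈ Finset.Icc 1 n, (1 : ℝ) / (j : ℝ) ^ m

noncomputable def Z (s : ℕ) : ℝ := ∑' n : ℕ, 1 / ((n : ℝ) + 1) ^ s

/-!
Writing `1/((n+r)(n+k)) = (k-r)⁻¹ ∑_{s=r}^{k-1} (1/(n+s) - 1/(n+s+1))` reduces the theorem
to the case `k = r + 1`. There Abel summation turns `∑ ζₙ(m) (1/(n+s) - 1/(n+s+1))` into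
`∑ 1/(n^m (n+s))`; the boundary term `ζ_N(m)/(N+s)` vanishes because `ζ_N(m)/N → 0` by Cesàro.
Expanding `1/(n^m (n+s))` in partial fractions in `n` evaluates that series as
`∑_{j=1}^{m-1} (-1)^(j-1) ζ(m+1-j)/s^j + (-1)^(m-1) H_s/s^m`, the last term coming from
`∑ (1/n - 1/(n+s)) = H_s`. Summing over `s` and regrouping gives the right-hand side.
-/

open Filter Finset Topology

lemma sum_Icc_one_eq_sum_range {M : Type*} [AddCommMonoid M] (f : ℕ → M) (n : ℕ) :
    ∑ j ∈ Icc 1 n, f j = ∑ i ∈ range n, f (i + 1) := by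
  rw [← Finset.Ico_add_one_right_eq_Icc, Finset.sum_Ico_eq_sum_range]
  simp [add_comm]

lemma sum_Ico_eq_sum_Icc_one_sub {G : Type*} [AddCommGroup G] (f : ℕ → G) {r k : ℕ}
    (hr : 1 ≤ r) (hrk : r ≤ k) :
    ∑ s ∈ Ico r k, f s = ∑ i ∈ Icc 1 (k - 1), f i - ∑ i ∈ Icc 1 (r - 1), f i := by
  rw [Icc_sub_one_right_eq_Ico_of_not_isMin (by simp; omega),
    Icc_sub_one_right_eq_Ico_of_not_isMin (by simp; omega), ← sum_Ico_consecutive f hr hrk]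
  abel

lemma zh_eq_sum_range (m n : ℕ) : zh m n = ∑ i ∈ range n, 1 / ((i : ℝ) + 1) ^ m := by
  simp [zh, sum_Icc_one_eq_sum_range]

lemma zh_nonneg (m n : ℕ) : 0 ≤ zh m n := sum_nonneg fun _ _ => by positivity

lemma H_eq_sum_range (n : ℕ) : H n = ∑ i ∈ range n, 1 / ((i : ℝ) + 1) := by
  simp [H, sum_Icc_one_eq_sum_range]

lemma summable_one_div_nat_add_one_pow {p : ℕ} (hp : 1 < p) :
    Summable fun n : ℕ => 1 / ((n : ℝ) + 1) ^ p := by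
  simpa using (summable_nat_add_iff 1).2 (Real.summable_one_div_nat_pow.2 hp)

lemma sum_range_sum_mul_sub {R : Type*} [CommRing R] (b a : ℕ → R) (N : ℕ) :
    ∑ n ∈ range N, (∑ i ∈ range (n + 1), b i) * (a n - a (n + 1)) =
      ∑ n ∈ range N, b n * a n - (∑ i ∈ range N, b i) * a N := by
  induction N with
  | zero => simp
  | succ N ih => rw [sum_range_succ, ih, sum_range_succ, sum_range_succ]; ring

lemma hasSum_sub_add_of_antitone {f : ℕ → ℝ} (hf : Antitone f)
    (hf0 : Tendsto f atTop (𝓝 0)) (s : ℕ) : HasSum (fun n => f n - f (n + s)) (∑ i ∈ range s, f i) := by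
  refine (hasSum_iff_tendsto_nat_of_nonneg (fun n => sub_nonneg.2 (hf (by omega))) _).2 ?_
  have hpartial (N : ℕ) : ∑ n ∈ range N, (f n - f (n + s)) =
      ∑ i ∈ range s, f i - ∑ i ∈ range s, f (N + i) := by
    have h1 := sum_range_add f N s
    have h2 := sum_range_add f s N
    rw [add_comm s N] at h2
    simp only [sum_sub_distrib, add_comm _ s]
    linarith
  simp only [hpartial]
  simpa using tendsto_const_nhds.sub
    (tendsto_finsetSum (range s) fun i _ => hf0.comp (tendsto_add_atTop_nat i))

lemma tendsto_zh_mul_one_div_add {m : ℕ} (hm : 1 ≤ m) {s : ℝ} (hs : 0 ≤ s) :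
    Tendsto (fun N : ℕ => zh m N * (1 / ((N : ℝ) + 1 + s))) atTop (𝓝 0) := by
  have hterm : Tendsto (fun i : ℕ => 1 / ((i : ℝ) + 1) ^ m) atTop (𝓝 0) := by
    simpa [one_div_pow, zero_pow (by omega : m ≠ 0)] using
      (tendsto_one_div_add_atTop_nhds_zero_nat (𝕜 := ℝ)).pow m
  have hcesaro : Tendsto (fun N : ℕ => (N : ℝ)⁻¹ * zh m N) atTop (𝓝 0) := by
    simpa [zh_eq_sum_range] using hterm.cesaro
  refine squeeze_zero (fun N => mul_nonneg (zh_nonneg m N) (by positivity)) (fun N => ?_)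
    hcesaro
  rcases N.eq_zero_or_pos with rfl | hN
  · simp [zh]
  · have := zh_nonneg m N
    rw [mul_comm, one_div]
    gcongr
    linarith

lemma summable_one_div_pow_mul_add {m : ℕ} (hm : 1 ≤ m) {s : ℝ} (hs : 0 ≤ s) :
    Summable fun n : ℕ => 1 / (((n : ℝ) + 1) ^ m * ((n : ℝ) + 1 + s)) := by
  refine (summable_one_div_nat_add_one_pow (p := m + 1) (by omega)).of_nonneg_of_le
    (fun n => by positivity) fun n => ?_
  rw [pow_succ]
  gcongr 1 / (_ * ?_)
  linarith

lemma hasSum_zh_mul_sub {m : ℕ} (hm : 1 ≤ m) {s : ℝ} (hs : 0 ≤ s) :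
    HasSum (fun n : ℕ => zh m (n + 1) * (1 / ((n : ℝ) + 1 + s) - 1 / ((n : ℝ) + 1 + 1 + s)))
      (∑' n : ℕ, 1 / (((n : ℝ) + 1) ^ m * ((n : ℝ) + 1 + s))) := by
  set a : ℕ → ℝ := fun n => 1 / ((n : ℝ) + 1 + s)
  have hnonneg (n : ℕ) : 0 ≤ zh m (n + 1) * (a n - a (n + 1)) := by
    refine mul_nonneg (zh_nonneg m _) (sub_nonneg.2 ?_)
    simp only [a]; push_cast; gcongr; linarith
  have hpartial (N : ℕ) : ∑ n ∈ range N, zh m (n + 1) * (a n - a (n + 1)) =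
      ∑ n ∈ range N, 1 / (((n : ℝ) + 1) ^ m * ((n : ℝ) + 1 + s)) - zh m N * a N := by
    simp only [zh_eq_sum_range, sum_range_sum_mul_sub, a, one_div_mul_one_div]
  have hlim := ((summable_one_div_pow_mul_add hm hs).hasSum.tendsto_sum_nat).sub
    (tendsto_zh_mul_one_div_add hm hs)
  rw [sub_zero] at hlim
  convert (hasSum_iff_tendsto_nat_of_nonneg hnonneg _).2 (by simpa only [hpartial] using hlim)
    using 3 with n
  simp [a]

lemma one_div_pow_succ_mul_add (m : ℕ) {x t : ℝ} (hx : x ≠ 0) (ht : t ≠ 0)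
    (hxt : x + t ≠ 0) :
    1 / (x ^ (m + 1) * (x + t)) =
      ∑ j ∈ range m, (-1) ^ j / t ^ (j + 1) * (1 / x ^ (m + 1 - j)) +
        (-1) ^ m / t ^ (m + 1) * (1 / x - 1 / (x + t)) := by
  induction m with
  | zero => field_simp; ring
  | succ m ih =>
    have hstep : 1 / (x ^ (m + 2) * (x + t)) =
        1 / t * (1 / x ^ (m + 2)) - 1 / t * (1 / (x ^ (m + 1) * (x + t))) := by
      field_simp; ring
    have hshift :
        ∑ j ∈ range m, (-1) ^ (j + 1) / t ^ (j + 1 + 1) * (1 / x ^ (m + 1 + 1 - (j + 1))) =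
          -(1 / t) * ∑ j ∈ range m, (-1) ^ j / t ^ (j + 1) * (1 / x ^ (m + 1 - j)) := by
      rw [mul_sum]
      refine sum_congr rfl fun j _ => ?_
      rw [Nat.add_sub_add_right]
      field_simp
      ring
    rw [hstep, ih, sum_range_succ', hshift, Nat.sub_zero]
    generalize ∑ j ∈ range m, (-1) ^ j / t ^ (j + 1) * (1 / x ^ (m + 1 - j)) = S
    field_simp
    ring

lemma hasSum_one_div_sub_one_div_add (s : ℕ) :
    HasSum (fun n : ℕ => 1 / ((n : ℝ) + 1) - 1 / ((n : ℝ) + 1 + s)) (H s) := by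
  have hanti : Antitone fun n : ℕ => 1 / ((n : ℝ) + 1) :=
    fun a b hab => by dsimp only; gcongr
  simpa [H_eq_sum_range, add_right_comm] using
    hasSum_sub_add_of_antitone hanti tendsto_one_div_add_atTop_nhds_zero_nat s

lemma tsum_one_div_pow_succ_mul_add (m : ℕ) {s : ℕ} (hs : s ≠ 0) :
    ∑' n : ℕ, 1 / (((n : ℝ) + 1) ^ (m + 1) * ((n : ℝ) + 1 + s)) =
      ∑ j ∈ range m, (-1) ^ j / (s : ℝ) ^ (j + 1) * Z (m + 1 - j) +
        (-1) ^ m / (s : ℝ) ^ (m + 1) * H s := by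
  have hZ : ∀ j ∈ range m, HasSum (fun n : ℕ => (-1) ^ j / (s : ℝ) ^ (j + 1) *
      (1 / ((n : ℝ) + 1) ^ (m + 1 - j))) ((-1) ^ j / (s : ℝ) ^ (j + 1) * Z (m + 1 - j)) :=
    fun j hj => (summable_one_div_nat_add_one_pow
      (by rw [mem_range] at hj; omega)).hasSum.mul_left _
  rw [← ((hasSum_sum hZ).add ((hasSum_one_div_sub_one_div_add s).mul_left _)).tsum_eq]
  exact tsum_congr fun n => one_div_pow_succ_mul_add m (by positivity) (by positivity)
    (by positivity)

lemma hasSum_zh_mul_sub_explicit {m : ℕ} (hm : 1 ≤ m) {s : ℕ} (hs : s ≠ 0) :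
    HasSum (fun n : ℕ => zh m (n + 1) * (1 / ((n : ℝ) + 1 + s) - 1 / ((n : ℝ) + 1 + 1 + s)))
      (∑ j ∈ Icc 1 (m - 1), (-1) ^ (j - 1) * Z (m + 1 - j) * (1 / (s : ℝ) ^ j) +
        (-1) ^ (m - 1) * (H s / (s : ℝ) ^ m)) := by
  obtain ⟨m, rfl⟩ : ∃ m', m = m' + 1 := ⟨m - 1, by omega⟩
  convert hasSum_zh_mul_sub hm (Nat.cast_nonneg s) using 1
  rw [tsum_one_div_pow_succ_mul_add m hs, sum_Icc_one_eq_sum_range, Nat.add_sub_cancel]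
  congr 1
  · refine sum_congr rfl fun j _ => ?_
    rw [Nat.add_sub_cancel, Nat.add_sub_add_right]
    ring
  · ring

lemma one_div_mul_eq_sum_Ico_sub (x : ℝ) {r k : ℕ} (hrk : r < k) (hr : x + r ≠ 0)
    (hk : x + k ≠ 0) :
    1 / ((x + r) * (x + k)) =
      1 / ((k : ℝ) - r) * ∑ s ∈ Ico r k, (1 / (x + s) - 1 / (x + 1 + s)) := by
  have htele :
      ∑ s ∈ Ico r k, (1 / (x + s) - 1 / (x + 1 + s)) = 1 / (x + r) - 1 / (x + k) := by
    rw [← neg_inj, ← sum_neg_distrib]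
    simp only [neg_sub]
    rw [← sum_Ico_sub (fun s : ℕ => 1 / (x + s)) hrk.le]
    refine sum_congr rfl fun s _ => ?_
    push_cast
    ring_nf
  have hkr : (k : ℝ) - r ≠ 0 := sub_ne_zero.2 (by exact_mod_cast hrk.ne')
  rw [htele]
  field_simp
  ring

theorem stmt6 (m r k : ℕ) (hm : 1 ≤ m) (hr : 1 ≤ r) (hrk : r < k) :
    ∑' n : ℕ, zh m (n + 1) / (((n : ℝ) + 1 + r) * ((n : ℝ) + 1 + k)) =
      (1 / ((k : ℝ) - r)) *
        (∑ j ∈ Finset.Icc 1 (m - 1),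
            (-1 : ℝ) ^ (j - 1) * Z (m + 1 - j) * (zh j (k - 1) - zh j (r - 1)) +
          (-1 : ℝ) ^ (m - 1) *
            (∑ i ∈ Finset.Icc 1 (k - 1), H i / (i : ℝ) ^ m -
              ∑ i ∈ Finset.Icc 1 (r - 1), H i / (i : ℝ) ^ m)) := by
  have hpartial (n : ℕ) : zh m (n + 1) / (((n : ℝ) + 1 + r) * ((n : ℝ) + 1 + k)) =
      1 / ((k : ℝ) - r) * ∑ s ∈ Ico r k,
        zh m (n + 1) * (1 / ((n : ℝ) + 1 + s) - 1 / ((n : ℝ) + 1 + 1 + s)) := by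
    rw [← mul_sum, div_eq_mul_one_div,
      one_div_mul_eq_sum_Ico_sub _ hrk (by positivity) (by positivity)]
    ring
  have hsum := (hasSum_sum (s := Ico r k) fun i hi => hasSum_zh_mul_sub_explicit (s := i) hm
    (by rw [mem_Ico] at hi; omega)).mul_left (1 / ((k : ℝ) - r))
  rw [tsum_congr hpartial, hsum.tsum_eq, sum_add_distrib, sum_comm, ← mul_sum,
    sum_Ico_eq_sum_Icc_one_sub _ hr hrk.le]
  congr 2
  refine sum_congr rfl fun j _ => ?_
  rw [← mul_sum, sum_Ico_eq_sum_Icc_one_sub _ hr hrk.le]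
  rfl
end

section
/- For every positive integer $k$, $\sum_{n=1}^{\infty} (-1)^{n-1}\frac{H_n}{n+k} = (-1)^{k-1}\left( \frac{1}{2}\ln^2 2 - \ln 2\,\big(H_{k-1} + L_{k-1}(1)\big) + \sum_{i=1}^{k-1} \frac{L_i(1)}{i} \right)$. -/
open Filter

noncomputable def La (m n : ℕ) : ℝ := ∑ j ∈ Finset.Icc 1 n, (-1 : ℝ) ^ (j - 1) / (j : ℝ) ^ m

/-!
Multiplying `F_N(x) = ∑_{n<N} (-1)^n H_{n+1} x^{n+1}` by `1 + x` telescopes the harmonic numbers: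
`(1 + x) F_N(x) = P_N(x) - (-1)^N H_N x^{N+1}`, where `P_N` is the `N`-th partial sum of the
Mercator series of `log (1 + x)`. Since `|log (1 + x) - P_N(x)| ≤ x^{N+1}/(N+1)` on `[0, 1]`, the
function `F_N` differs from `log (1 + x) / (1 + x)` by at most `H_{N+1} x^{N+1}` there. The `N`-th
partial sum of the series is `∫₀¹ x^{k-1} F_N(x) dx`, so it differs from
`I_{k-1} = ∫₀¹ x^{k-1} log (1 + x) / (1 + x) dx` by at most `H_{N+1}/(N+2) → 0`.
Finally `I_{m+1} + I_m = ∫₀¹ x^m log (1 + x) dx`, which integration by parts reduces to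
`J_{m+1} = ∫₀¹ x^{m+1}/(1 + x) dx`, and `J_k = (-1)^k (log 2 - L_k(1))` by the same recurrence
`J_{k+1} + J_k = 1/(k+1)`.
-/

open Finset Real intervalIntegral

lemma H_succ (n : ℕ) : H (n + 1) = H n + 1 / (n + 1) := by
  rw [H, H, sum_Icc_succ_top (by omega)]
  push_cast; ring

lemma La_one_succ (n : ℕ) : La 1 (n + 1) = La 1 n + (-1) ^ n / (n + 1) := by
  rw [La, La, sum_Icc_succ_top (by omega)]
  simp

lemma H_eq_harmonic (n : ℕ) : H n = harmonic n := by
  simp [H, harmonic_eq_sum_Icc]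

lemma H_nonneg (n : ℕ) : 0 ≤ H n := by
  rw [H]; positivity

lemma tendsto_H_div_add_one : Tendsto (fun n : ℕ => H n / (n + 1)) atTop (nhds 0) := by
  have hlog : Tendsto (fun n : ℕ => (1 + log n) / (n + 1)) atTop (nhds 0) := by
    have h := (tendsto_pow_log_div_mul_add_atTop 1 1 1 one_ne_zero).comp
      (tendsto_natCast_atTop_atTop (R := ℝ))
    simpa [add_div] using tendsto_one_div_add_atTop_nhds_zero_nat.add h
  refine squeeze_zero (fun n => div_nonneg (H_nonneg n) (by positivity)) (fun n => ?_) hlog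
  gcongr
  rw [H_eq_harmonic]
  exact_mod_cast harmonic_le_one_add_log n

lemma one_add_pos_of_mem_uIcc {x : ℝ} (hx : x ∈ Set.uIcc (0 : ℝ) 1) : 0 < 1 + x := by
  rw [Set.uIcc_of_le zero_le_one] at hx
  linarith [hx.1]

lemma hasDerivAt_log_one_add {t : ℝ} (ht : 0 < 1 + t) :
    HasDerivAt (fun y => log (1 + y)) (1 + t)⁻¹ t := by
  simpa using ((hasDerivAt_id t).const_add 1).log ht.ne'

noncomputable def logPartialSum (N : ℕ) (x : ℝ) : ℝ :=
  ∑ n ∈ range N, (-1) ^ n * x ^ (n + 1) / (n + 1)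

lemma hasDerivAt_logPartialSum (N : ℕ) (t : ℝ) :
    HasDerivAt (logPartialSum N) (∑ n ∈ range N, (-t) ^ n) t := by
  unfold logPartialSum
  refine HasDerivAt.fun_sum fun n _ => ?_
  refine (((hasDerivAt_pow (n + 1) t).const_mul ((-1 : ℝ) ^ n)).div_const
    ((n : ℝ) + 1)).congr_deriv ?_
  push_cast
  field_simp
  rw [neg_pow t]

lemma hasDerivAt_log_one_add_sub_logPartialSum (N : ℕ) {t : ℝ} (ht : 0 < 1 + t) :
    HasDerivAt (fun y => log (1 + y) - logPartialSum N y) ((-t) ^ N / (1 + t)) t := by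
  refine ((hasDerivAt_log_one_add ht).sub (hasDerivAt_logPartialSum N t)).congr_deriv ?_
  have hgeom := geom_sum_mul_neg (-t) N
  rw [sub_neg_eq_add] at hgeom
  field_simp
  linear_combination -hgeom

lemma abs_log_one_add_sub_logPartialSum_le (N : ℕ) {x : ℝ} (hx : x ∈ Set.Icc (0 : ℝ) 1) :
    |log (1 + x) - logPartialSum N x| ≤ x ^ (N + 1) / (N + 1) := by
  have hpos : ∀ t ∈ Set.uIcc 0 x, 0 < 1 + t := fun t ht =>
    one_add_pos_of_mem_uIcc (Set.uIcc_subset_uIcc_left (by simpa [Set.uIcc_of_le] using hx) ht)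
  have hcont : ContinuousOn (fun t : ℝ => (-t) ^ N / (1 + t)) (Set.uIcc 0 x) :=
    (by fun_prop : Continuous fun t : ℝ => (-t) ^ N).continuousOn.div (by fun_prop)
      fun t ht => (hpos t ht).ne'
  have hftc := integral_eq_sub_of_hasDerivAt
    (fun t ht => hasDerivAt_log_one_add_sub_logPartialSum N (hpos t ht)) hcont.intervalIntegrable
  simp only [add_zero, log_one, logPartialSum, zero_pow (Nat.succ_ne_zero _), mul_zero, zero_div,
    sum_const_zero, sub_zero] at hftc
  rw [logPartialSum, ← hftc]
  calc |∫ t in (0 : ℝ)..x, (-t) ^ N / (1 + t)|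
      ≤ ∫ t in (0 : ℝ)..x, |(-t) ^ N / (1 + t)| := abs_integral_le_integral_abs hx.1
    _ ≤ ∫ t in (0 : ℝ)..x, t ^ N := by
        refine integral_mono_on hx.1 hcont.abs.intervalIntegrable
          ((continuous_pow N).intervalIntegrable _ _) fun t ht => ?_
        rw [abs_div, abs_pow, abs_neg, abs_of_nonneg ht.1, abs_of_pos (by linarith [ht.1])]
        exact div_le_self (pow_nonneg ht.1 N) (by linarith [ht.1])
    _ = x ^ (N + 1) / (N + 1) := by simp [integral_pow]

noncomputable def altHarmonicPoly (N : ℕ) (x : ℝ) : ℝ :=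
  ∑ n ∈ range N, (-1) ^ n * H (n + 1) * x ^ (n + 1)

lemma one_add_mul_altHarmonicPoly (N : ℕ) (x : ℝ) :
    (1 + x) * altHarmonicPoly N x = logPartialSum N x - (-1) ^ N * H N * x ^ (N + 1) := by
  induction N with
  | zero => simp [altHarmonicPoly, logPartialSum, H]
  | succ N ih =>
    simp only [altHarmonicPoly, logPartialSum, sum_range_succ] at ih ⊢
    rw [mul_add, ih, H_succ]
    ring

lemma abs_altHarmonicPoly_sub_le (N : ℕ) {x : ℝ} (hx : x ∈ Set.Icc (0 : ℝ) 1) :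
    |altHarmonicPoly N x - log (1 + x) / (1 + x)| ≤ H (N + 1) * x ^ (N + 1) := by
  have hpos : 0 < 1 + x := by linarith [hx.1]
  have hmul : (1 + x) * (altHarmonicPoly N x - log (1 + x) / (1 + x)) =
      -(log (1 + x) - logPartialSum N x) - (-1) ^ N * H N * x ^ (N + 1) := by
    rw [mul_sub, one_add_mul_altHarmonicPoly, mul_div_cancel₀ _ hpos.ne']
    ring
  calc |altHarmonicPoly N x - log (1 + x) / (1 + x)|
      ≤ |(1 + x) * (altHarmonicPoly N x - log (1 + x) / (1 + x))| := by
        rw [abs_mul, abs_of_pos hpos]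
        exact le_mul_of_one_le_left (abs_nonneg _) (by linarith [hx.1])
    _ ≤ x ^ (N + 1) / (N + 1) + H N * x ^ (N + 1) := by
        rw [hmul]
        refine (abs_sub _ _).trans (add_le_add ?_ ?_)
        · rw [abs_neg]
          exact abs_log_one_add_sub_logPartialSum_le N hx
        · rw [abs_mul, abs_mul, abs_neg_one_pow, one_mul, abs_of_nonneg (H_nonneg N),
            abs_of_nonneg (pow_nonneg hx.1 _)]
    _ = H (N + 1) * x ^ (N + 1) := by
        rw [H_succ]
        ring

lemma integral_pow_succ_mul_add_integral_pow_mul {f : ℝ → ℝ} {a b : ℝ}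
    (hf : IntervalIntegrable f MeasureTheory.volume a b) (k : ℕ) :
    (∫ x in a..b, x ^ (k + 1) * f x) + ∫ x in a..b, x ^ k * f x =
      ∫ x in a..b, x ^ k * ((1 + x) * f x) := by
  rw [← integral_add (hf.continuousOn_mul (by fun_prop)) (hf.continuousOn_mul (by fun_prop))]
  congr 1
  ext x
  ring

lemma intervalIntegrable_inv_one_add :
    IntervalIntegrable (fun x : ℝ => (1 + x)⁻¹) MeasureTheory.volume 0 1 :=
  ((continuousOn_const.add continuousOn_id).inv₀
    fun _ hx => (one_add_pos_of_mem_uIcc hx).ne').intervalIntegrable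

lemma integral_pow_mul_inv_one_add (k : ℕ) :
    ∫ x in (0 : ℝ)..1, x ^ k * (1 + x)⁻¹ = (-1) ^ k * (log 2 - La 1 k) := by
  induction k with
  | zero =>
    simp only [pow_zero, one_mul, integral_comp_add_left (fun x => x⁻¹)]
    rw [integral_inv_of_pos (by norm_num) (by norm_num)]
    norm_num [La]
  | succ k ih =>
    have hrhs : ∫ x in (0 : ℝ)..1, x ^ k * ((1 + x) * (1 + x)⁻¹) = 1 / (k + 1) := by
      rw [integral_congr (g := fun x => x ^ k) fun x hx => by
        simp [mul_inv_cancel₀ (one_add_pos_of_mem_uIcc hx).ne'], integral_pow]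
      simp
    have hrec := integral_pow_succ_mul_add_integral_pow_mul intervalIntegrable_inv_one_add k
    rw [hrhs, ih] at hrec
    rw [eq_sub_of_add_eq hrec, La_one_succ, pow_succ]
    have hsq : (-1 : ℝ) ^ k * (-1) ^ k = 1 := by rw [← mul_pow]; norm_num
    field_simp
    linear_combination -hsq

lemma continuousOn_log_one_add : ContinuousOn (fun x : ℝ => log (1 + x)) (Set.uIcc 0 1) :=
  (continuousOn_const.add continuousOn_id).log fun _ hx => (one_add_pos_of_mem_uIcc hx).ne'

lemma integral_pow_mul_log_one_add (m : ℕ) :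
    ∫ x in (0 : ℝ)..1, x ^ m * log (1 + x) =
      (log 2 - ∫ x in (0 : ℝ)..1, x ^ (m + 1) * (1 + x)⁻¹) / (m + 1) := by
  have hparts := integral_mul_deriv_eq_deriv_mul
    (fun x hx => hasDerivAt_log_one_add (one_add_pos_of_mem_uIcc hx))
    (fun x _ => ((hasDerivAt_pow (m + 1) x).div_const ((m : ℝ) + 1)).congr_deriv
      (by field_simp; simp))
    intervalIntegrable_inv_one_add ((continuous_pow m).intervalIntegrable 0 1)
  simp only [mul_comm (log _), one_add_one_eq_two] at hparts
  have hintegrand : (fun x : ℝ => (1 + x)⁻¹ * (x ^ (m + 1) / (m + 1))) =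
      fun x : ℝ => x ^ (m + 1) * (1 + x)⁻¹ / (m + 1) := by
    ext x
    ring
  rw [hparts, hintegrand, integral_div]
  simp
  ring

noncomputable def closedForm (m : ℕ) : ℝ :=
  log 2 ^ 2 / 2 - log 2 * (H m + La 1 m) + ∑ i ∈ Icc 1 m, La 1 i / i

lemma closedForm_succ (m : ℕ) :
    closedForm (m + 1) =
      closedForm m - log 2 * (1 + (-1) ^ m) / (m + 1) + La 1 (m + 1) / (m + 1) := by
  rw [closedForm, closedForm, sum_Icc_succ_top (by omega), H_succ]
  nth_rewrite 1 [La_one_succ]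
  push_cast
  ring

lemma continuousOn_log_one_add_div_one_add :
    ContinuousOn (fun x : ℝ => log (1 + x) / (1 + x)) (Set.uIcc 0 1) :=
  continuousOn_log_one_add.div (by fun_prop) fun _ hx => (one_add_pos_of_mem_uIcc hx).ne'

lemma integral_pow_mul_log_one_add_div_one_add (m : ℕ) :
    ∫ x in (0 : ℝ)..1, x ^ m * (log (1 + x) / (1 + x)) = (-1) ^ m * closedForm m := by
  induction m with
  | zero =>
    have hftc := integral_eq_sub_of_hasDerivAt (f := fun y => log (1 + y) ^ 2 / 2)
      (fun t ht => (((hasDerivAt_log_one_add (one_add_pos_of_mem_uIcc ht)).pow 2).div_const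
        2).congr_deriv (by simp; ring))
      (continuousOn_log_one_add_div_one_add.intervalIntegrable)
    simp only [pow_zero, one_mul]
    rw [hftc]
    norm_num [closedForm, H, La]
  | succ m ih =>
    have hlog : ∫ x in (0 : ℝ)..1, x ^ m * ((1 + x) * (log (1 + x) / (1 + x))) =
        ∫ x in (0 : ℝ)..1, x ^ m * log (1 + x) :=
      integral_congr fun x hx => by
        simp only [mul_div_cancel₀ _ (one_add_pos_of_mem_uIcc hx).ne']
    have hrec := integral_pow_succ_mul_add_integral_pow_mul
      continuousOn_log_one_add_div_one_add.intervalIntegrable m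
    rw [hlog, integral_pow_mul_log_one_add, integral_pow_mul_inv_one_add, ih] at hrec
    rw [eq_sub_of_add_eq hrec, closedForm_succ, pow_succ]
    have hsq : (-1 : ℝ) ^ m * (-1) ^ m = 1 := by rw [← mul_pow]; norm_num
    field_simp
    linear_combination (-log 2) * hsq

lemma sum_eq_integral_pow_mul_altHarmonicPoly (m N : ℕ) :
    ∑ n ∈ range N, (-1) ^ n * H (n + 1) / ((n : ℝ) + m + 2) =
      ∫ x in (0 : ℝ)..1, x ^ m * altHarmonicPoly N x := by
  simp only [altHarmonicPoly, mul_sum]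
  rw [integral_finsetSum fun n _ => (by fun_prop : Continuous _).intervalIntegrable 0 1]
  refine sum_congr rfl fun n _ => ?_
  have hterm : (fun x : ℝ => x ^ m * ((-1) ^ n * H (n + 1) * x ^ (n + 1))) =
      fun x => (-1) ^ n * H (n + 1) * x ^ (m + n + 1) := by
    ext x
    ring
  rw [hterm, integral_const_mul, integral_pow]
  push_cast
  ring

lemma abs_integral_pow_mul_altHarmonicPoly_sub_le (m N : ℕ) :
    |(∫ x in (0 : ℝ)..1, x ^ m * altHarmonicPoly N x) -
        ∫ x in (0 : ℝ)..1, x ^ m * (log (1 + x) / (1 + x))| ≤ H (N + 1) / (N + 2) := by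
  have hcont : ContinuousOn (fun x : ℝ => x ^ m * altHarmonicPoly N x) (Set.uIcc 0 1) :=
    (by unfold altHarmonicPoly; fun_prop : Continuous _).continuousOn
  have hlim : ContinuousOn (fun x : ℝ => x ^ m * (log (1 + x) / (1 + x))) (Set.uIcc 0 1) :=
    (continuousOn_pow m).mul continuousOn_log_one_add_div_one_add
  rw [← integral_sub hcont.intervalIntegrable hlim.intervalIntegrable]
  calc |∫ x in (0 : ℝ)..1, x ^ m * altHarmonicPoly N x - x ^ m * (log (1 + x) / (1 + x))|
      ≤ ∫ x in (0 : ℝ)..1, |x ^ m * altHarmonicPoly N x - x ^ m * (log (1 + x) / (1 + x))| :=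
        abs_integral_le_integral_abs zero_le_one
    _ ≤ ∫ x in (0 : ℝ)..1, H (N + 1) * x ^ (N + 1) := by
        refine integral_mono_on zero_le_one (hcont.sub hlim).abs.intervalIntegrable
          ((by fun_prop : Continuous _).intervalIntegrable 0 1) fun x hx => ?_
        rw [← mul_sub, abs_mul, abs_of_nonneg (pow_nonneg hx.1 m)]
        exact (mul_le_of_le_one_left (abs_nonneg _) (pow_le_one₀ hx.1 hx.2)).trans
          (abs_altHarmonicPoly_sub_le N hx)
    _ = H (N + 1) / (N + 2) := by
        rw [integral_const_mul, integral_pow]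
        push_cast
        ring

theorem tendsto_sum_neg_one_pow_mul_H_div (m : ℕ) :
    Tendsto (fun N => ∑ n ∈ range N, (-1) ^ n * H (n + 1) / ((n : ℝ) + m + 2)) atTop
      (nhds ((-1) ^ m * closedForm m)) := by
  rw [← integral_pow_mul_log_one_add_div_one_add]
  refine tendsto_iff_norm_sub_tendsto_zero.2
    (squeeze_zero (g := fun N : ℕ => H (N + 1) / (N + 2)) (fun _ => norm_nonneg _)
      (fun N => ?_) ?_)
  · rw [sum_eq_integral_pow_mul_altHarmonicPoly]
    exact abs_integral_pow_mul_altHarmonicPoly_sub_le m N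
  · have h := tendsto_H_div_add_one.comp (tendsto_add_atTop_nat 1)
    simpa only [Function.comp_def, Nat.cast_add, Nat.cast_one, add_assoc, one_add_one_eq_two]
      using h

theorem stmt16 (k : ℕ) (hk : 0 < k) :
    Tendsto (fun N => ∑ n ∈ Finset.range N, (-1 : ℝ) ^ n * H (n + 1) / ((n : ℝ) + 1 + k))
      atTop
      (nhds ((-1 : ℝ) ^ (k - 1) *
        ((Real.log 2) ^ 2 / 2 - Real.log 2 * (H (k - 1) + La 1 (k - 1)) +
          ∑ i ∈ Finset.Icc 1 (k - 1), La 1 i / i))) := by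
  obtain ⟨m, rfl⟩ : ∃ m, k = m + 1 := ⟨k - 1, by omega⟩
  rw [Nat.add_sub_cancel]
  convert tendsto_sum_neg_one_pow_mul_H_div m using 4 with N n
  · push_cast
    ring
  · rfl
end
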